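/- Let g = [[a,b],[c,d]] in SL_2(Z) and g_1 = beta^{-1} g beta with beta = [[p, omega],[1, conj(p)]], p = 2+omega. Then g_1 satisfies g_1^* J_F g_1 = J_F (it is an isometry of the Hermitian form J_F = [[3,4p],[4 conj(p),3]]). Moreover g_1 has all entries in E = Z[omega] if and only if p_1 divides p(a-d) + (b+c) in E, where p_1 = 3 - omega. -/

import Mathlib

noncomputable section

/-- `ω = e^{2πi/3}`. -/
def ω : ℂ := Complex.exp (2 * Real.pi * Complex.I / 3)

/-- `p = 2 + ω`. -/
def p : ℂ := 2 + ω

/-- `p₁ = 3 - ω` (a prime of norm 13 in `ℤ[ω]`). -/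
def p₁ : ℂ := 3 - ω

/-- The matrix `β = [[p, ω], [1, conj p]]`. -/
def β : Matrix (Fin 2) (Fin 2) ℂ := !![p, ω; 1, (starRingEnd ℂ) p]

/-- The Gram matrix `J_F = [[3, 4p], [4 conj p, 3]]`. -/
def JF : Matrix (Fin 2) (Fin 2) ℂ := !![3, 4 * p; 4 * (starRingEnd ℂ) p, 3]

/-!
With `θ = 1 + 2ω = √-3` and `S = [[0, 1], [-1, 0]]` one has `J_F = βᴴ (θ S) β`. Every integral
`g` of determinant one satisfies `gᵀ S g = S`, and `g` is real, so `g` is an isometry of `θ S`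
and `β⁻¹ g β` is an isometry of `βᴴ (θ S) β = J_F`.

Since `det β = p₁`, `g₁ = p₁⁻¹ adj(β) g β`. Modulo `p₁` (where `ω ≡ 3` and `E / p₁ ≅ 𝔽₁₃`),
`adj(β) g β ≡ -X K` with `X = p (a - d) + (b + c)` and `K = [[2, -4], [1, -2]]`; that is,
`g₁ = Y - (X / p₁) K` with `Y` integral. As `K` has integral entries and the entry `1`,
`g₁` is integral exactly when `X / p₁` is.
-/

open Matrix

def Matrix.IsIsometry {R n : Type*} [Fintype n] [CommRing R] [StarRing R]
    (X g : Matrix n n R) : Prop :=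
  gᴴ * X * g = X

namespace Matrix.IsIsometry

variable {R n : Type*} [Fintype n] [CommRing R] [StarRing R] {X g : Matrix n n R}

lemma conj [DecidableEq n] {β : Matrix n n R} (hβ : IsUnit β.det) (hg : IsIsometry X g) :
    IsIsometry (βᴴ * X * β) (β⁻¹ * g * β) := by
  have h₁ : β * β⁻¹ = 1 := mul_nonsing_inv β hβ
  have h₂ : β⁻¹ᴴ * βᴴ = 1 := by rw [← conjTranspose_mul, h₁, conjTranspose_one]
  calc (β⁻¹ * g * β)ᴴ * (βᴴ * X * β) * (β⁻¹ * g * β)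
      = βᴴ * gᴴ * (β⁻¹ᴴ * βᴴ) * X * (β * β⁻¹) * g * β := by
        simp only [conjTranspose_mul, Matrix.mul_assoc]
    _ = βᴴ * (gᴴ * X * g) * β := by simp only [h₁, h₂, Matrix.mul_one, Matrix.mul_assoc]
    _ = βᴴ * X * β := by rw [show gᴴ * X * g = X from hg]

lemma smul (hg : IsIsometry X g) (c : R) : IsIsometry (c • X) g := by
  rw [IsIsometry, Matrix.mul_smul, Matrix.smul_mul, show gᴴ * X * g = X from hg]

end Matrix.IsIsometry

lemma Matrix.transpose_mul_J_mul {R : Type*} [CommRing R] (M : Matrix (Fin 2) (Fin 2) R) :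
    Mᵀ * !![0, 1; -1, 0] * M = M.det • !![0, 1; -1, 0] := by
  rw [M.eta_fin_two, det_fin_two_of]
  ext i j
  fin_cases i <;> fin_cases j <;> simp [Matrix.mul_apply, Fin.sum_univ_two] <;> ring

lemma isIsometry_J_intCast {a b c d : ℤ} (h : a * d - b * c = 1) :
    IsIsometry !![(0 : ℂ), 1; -1, 0] !![(a : ℂ), b; c, d] := by
  have hT : !![(a : ℂ), b; c, d]ᴴ = !![(a : ℂ), b; c, d]ᵀ := by
    ext i j
    fin_cases i <;> fin_cases j <;> simp
  have hdet : (a : ℂ) * d - b * c = 1 := by exact_mod_cast h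
  rw [IsIsometry, hT, transpose_mul_J_mul, det_fin_two_of, hdet, one_smul]

lemma forall_sub_smul_apply_mem_iff {R m n : Type*} [CommRing R] {S : Subring R}
    {Y K : Matrix m n R} (hY : ∀ i j, Y i j ∈ S) (hK : ∀ i j, K i j ∈ S) {i₀ : m} {j₀ : n}
    (hK₀ : K i₀ j₀ = 1) (x : R) :
    (∀ i j, (Y - x • K) i j ∈ S) ↔ x ∈ S := by
  refine ⟨fun h ↦ ?_, fun hx i j ↦ S.sub_mem (hY i j) (S.mul_mem hx (hK i j))⟩
  have hx : x = Y i₀ j₀ - (Y - x • K) i₀ j₀ := by simp [hK₀]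
  exact hx ▸ S.sub_mem (hY i₀ j₀) (h i₀ j₀)

lemma isPrimitiveRoot_ω : IsPrimitiveRoot ω 3 := by
  simpa [ω] using Complex.isPrimitiveRoot_exp 3 (by norm_num)

lemma ω_sq_add_ω_add_one : ω ^ 2 + ω + 1 = 0 := by
  have h := isPrimitiveRoot_ω.geom_sum_eq_zero (by norm_num)
  simp only [Finset.sum_range_succ, Finset.sum_range_zero] at h
  linear_combination h

lemma conj_ω : (starRingEnd ℂ) ω = -1 - ω := by
  rw [← Complex.inv_eq_conj (isPrimitiveRoot_ω.norm'_eq_one (by norm_num))]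
  exact inv_eq_of_mul_eq_one_right (by linear_combination -ω_sq_add_ω_add_one)

lemma conj_p : (starRingEnd ℂ) p = 1 - ω := by
  simp only [p, map_add, map_ofNat, conj_ω]
  ring

lemma p₁_ne_zero : p₁ ≠ 0 := by
  intro h
  rw [p₁] at h
  have hω : ω = 3 := by linear_combination -h
  have := ω_sq_add_ω_add_one
  norm_num [hω] at this

lemma det_β : β.det = p₁ := by
  rw [β, det_fin_two_of, conj_p, p, p₁]
  linear_combination -ω_sq_add_ω_add_one

lemma JF_eq : JF = βᴴ * ((1 + 2 * ω) • !![0, 1; -1, 0]) * β := by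
  have hω := ω_sq_add_ω_add_one
  rw [JF, β, conj_p, p]
  ext i j
  fin_cases i <;> fin_cases j <;>
    simp [Matrix.mul_apply, Fin.sum_univ_two, conj_ω, map_ofNat]
  · linear_combination 4 * hω
  · linear_combination (7 - 2 * ω) * hω
  · linear_combination (9 + 2 * ω) * hω
  · linear_combination 4 * hω

/-- The Eisenstein integers `E = ℤ[ω]`. -/
def eisensteinInt : Subring ℂ where
  carrier := {z | ∃ m n : ℤ, z = m + n * ω}
  mul_mem' := by
    rintro _ _ ⟨m, n, rfl⟩ ⟨m', n', rfl⟩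
    exact ⟨m * m' - n * n', m * n' + n * m' - n * n', by
      push_cast; linear_combination (n * n' : ℂ) * ω_sq_add_ω_add_one⟩
  one_mem' := ⟨1, 0, by simp⟩
  add_mem' := by
    rintro _ _ ⟨m, n, rfl⟩ ⟨m', n', rfl⟩
    exact ⟨m + m', n + n', by push_cast; ring⟩
  zero_mem' := ⟨0, 0, by simp⟩
  neg_mem' := by
    rintro _ ⟨m, n, rfl⟩
    exact ⟨-m, -n, by push_cast; ring⟩

lemma div_p₁_mem_eisensteinInt_iff (z : ℂ) :
    z / p₁ ∈ eisensteinInt ↔ ∃ m n : ℤ, z = p₁ * (m + n * ω) := by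
  change (∃ m n : ℤ, _ = _) ↔ _
  simp only [div_eq_iff p₁_ne_zero, mul_comm p₁]

lemma exists_β_inv_mul_mul_β_eq_sub_smul (a b c d : ℤ) :
    ∃ Y : Matrix (Fin 2) (Fin 2) ℂ, (∀ i j, Y i j ∈ eisensteinInt) ∧
      β⁻¹ * !![(a : ℂ), b; c, d] * β =
        Y - ((p * (a - d) + (b + c)) / p₁) • !![2, -4; 1, -2] := by
  refine ⟨!![(2 * a + b + c - d : ℤ) + (a - d : ℤ) * ω,
      (2 * d - 2 * a - b - c : ℤ) + (d - a - b : ℤ) * ω;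
    (c : ℤ) + (c : ℤ) * ω, (2 * d - a - b - c : ℤ) + (d - a : ℤ) * ω], ?_, ?_⟩
  · intro i j
    fin_cases i <;> fin_cases j <;> exact ⟨_, _, rfl⟩
  have hω := ω_sq_add_ω_add_one
  have hp₁ := p₁_ne_zero
  rw [inv_def, det_β, Ring.inverse_eq_inv', β, adjugate_fin_two_of, conj_p]
  ext i j
  fin_cases i <;> fin_cases j <;>
    simp [Matrix.mul_apply, Fin.sum_univ_two, p] <;> field_simp <;> rw [p₁]
  · linear_combination (-c - d : ℂ) * hω
  · linear_combination (2 * d - 2 * a - c : ℂ) * hω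
  · linear_combination (2 * c : ℂ) * hω
  · linear_combination (c - a : ℂ) * hω

/-- For `g = [[a,b],[c,d]] ∈ SL₂(ℤ)`, the conjugate `g₁ = β⁻¹ g β` is an isometry of
the Hermitian form `J_F`, and all entries of `g₁` lie in `E = ℤ[ω]` if and only if
`p₁ = 3 - ω` divides `p(a-d) + (b+c)` in `E`. -/
theorem conjugated_matrix_integral_iff (a b c d : ℤ) (h : a * d - b * c = 1) :
    letI g : Matrix (Fin 2) (Fin 2) ℂ := !![(a : ℂ), (b : ℂ); (c : ℂ), (d : ℂ)]
    letI g₁ : Matrix (Fin 2) (Fin 2) ℂ := β⁻¹ * g * β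
    g₁.conjTranspose * JF * g₁ = JF ∧
    ((∀ i j, ∃ m n : ℤ, g₁ i j = (m : ℂ) + (n : ℂ) * ω) ↔
      ∃ m n : ℤ, p * ((a : ℂ) - (d : ℂ)) + ((b : ℂ) + (c : ℂ)) =
        p₁ * ((m : ℂ) + (n : ℂ) * ω)) := by
  refine ⟨?_, ?_⟩
  · rw [JF_eq]
    exact ((isIsometry_J_intCast h).smul _).conj (det_β ▸ p₁_ne_zero.isUnit)
  · obtain ⟨Y, hY, hg₁⟩ := exists_β_inv_mul_mul_β_eq_sub_smul a b c d
    have hK : ∀ i j, (!![2, -4; 1, -2] : Matrix (Fin 2) (Fin 2) ℂ) i j ∈ eisensteinInt := by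
      intro i j
      fin_cases i <;> fin_cases j <;> simp [neg_mem_iff, ofNat_mem, one_mem]
    rw [hg₁]
    exact (forall_sub_smul_apply_mem_iff hY hK (i₀ := 1) (j₀ := 0) rfl _).trans
      (div_p₁_mem_eisensteinInt_iff _)
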